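/- arXiv:0710.5894 — 4 statements merged into one kernel-verified Lean document; each statement's English description precedes it below -/
import Mathlib

section
/- Let (a_0, a_1, ..., a_N) be a finite sequence of real numbers and f a real analytic function on [0, N] (not identically zero) such that f(n) = (-1)^n * a_n for each integer 0 ≤ n ≤ N. Then the number of zeros of f on [0, N], counted with multiplicities, is at least N minus the number of sign changes of the sequence (a_n). Here a sign change occurs at index m if there exists k < m with a_k * a_m < 0 and a_j = 0 for all k < j < m. -/
/-- A sign change of the real sequence `a` occurs at place `m`. -/
def SignChangeAt (a : ℕ → ℝ) (m : ℕ) : Prop :=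
  ∃ k < m, a k * a m < 0 ∧ ∀ j, k < j → j < m → a j = 0

/-- `f` vanishes to exact order `n` at `x`. -/
def ZeroMult (f : ℝ → ℝ) (x : ℝ) (n : ℕ) : Prop :=
  ∃ g : ℝ → ℝ, AnalyticAt ℝ g x ∧ g x ≠ 0 ∧ ∀ᶠ y in nhds x, f y = (y - x) ^ n * g y

/-!
Near a zero `x` of order `n`, `f y * f z` has the sign of `(-1) ^ n` for `y < x < z`, so for
`u < v` with `f u, f v ≠ 0` the number of zeros in `(u, v)` counted with multiplicity is even
exactly when `f u * f v > 0`. Take consecutive indices `r < m` with `a r ≠ 0 ≠ a m`: the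
`m - r - 1` integers between them are zeros of `f`, and if there is no sign change at `m`, then
`f r * f m` has the sign of `(-1) ^ (r + m)`, so the parity forces at least `m - r` zeros in
`(r, m)`. Adding these bounds over consecutive pairs, together with the integer zeros before the
first and after the last nonzero entry of `a`, gives the theorem.
-/

open Set Filter Topology

section Analytic

variable {𝕜 E : Type*} [NontriviallyNormedField 𝕜] [NormedAddCommGroup E] [NormedSpace 𝕜 E]
  {f : 𝕜 → E} {U : Set 𝕜} {x x₀ : 𝕜}

theorem AnalyticOnNhd.finite_zeros_of_isCompact (hf : AnalyticOnNhd 𝕜 f U) (hU : IsCompact U)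
    (hU' : IsConnected U) (hx₀ : x₀ ∈ U) (hfx₀ : f x₀ ≠ 0) : {x ∈ U | f x = 0}.Finite := by
  have := hU.finite_sdiff_of_mem_codiscreteWithin
    (hf.preimage_zero_mem_codiscreteWithin hfx₀ hx₀ hU')
  rwa [preimage_compl, sdiff_compl] at this

theorem AnalyticOnNhd.analyticOrderAt_ne_top_of_apply_ne_zero (hf : AnalyticOnNhd 𝕜 f U)
    (hU : IsPreconnected U) (hx₀ : x₀ ∈ U) (hfx₀ : f x₀ ≠ 0) (hx : x ∈ U) :
    analyticOrderAt f x ≠ ⊤ :=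
  hf.analyticOrderAt_ne_top_of_isPreconnected hU hx₀ hx <| by
    simp [(hf x₀ hx₀).analyticOrderAt_eq_zero.mpr hfx₀]

theorem AnalyticAt.analyticOrderNatAt_pos (hf : AnalyticAt 𝕜 f x) (hx : analyticOrderAt f x ≠ ⊤)
    (h0 : f x = 0) : 0 < analyticOrderNatAt f x := by
  rw [Nat.pos_iff_ne_zero, ← Nat.cast_ne_zero (R := ℕ∞), Nat.cast_analyticOrderNatAt hx]
  exact hf.analyticOrderAt_ne_zero.mpr h0

theorem support_analyticOrderNatAt_subset : Function.support (analyticOrderNatAt f) ⊆ f ⁻¹' {0} :=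
  fun _ hx ↦ apply_eq_zero_of_analyticOrderNatAt_ne_zero hx

end Analytic

theorem AnalyticAt.zeroMult {f : ℝ → ℝ} {x : ℝ} (hf : AnalyticAt ℝ f x)
    (hx : analyticOrderAt f x ≠ ⊤) : ZeroMult f x (analyticOrderNatAt f x) := by
  obtain ⟨g, hg, hgx, hfg⟩ := hf.analyticOrderAt_ne_top.mp hx
  exact ⟨g, hg, hgx, hfg⟩

theorem ContinuousOn.mul_pos_of_forall_ne_zero {f : ℝ → ℝ} {u v : ℝ}
    (hf : ContinuousOn f (Icc u v)) (huv : u ≤ v) (h0 : ∀ x ∈ Icc u v, f x ≠ 0) :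
    0 < f u * f v := by
  by_contra! h
  obtain ⟨x, hx, hfx⟩ : (0 : ℝ) ∈ f '' Icc u v := by
    rcases mul_nonpos_iff.mp h with ⟨hu, hv⟩ | ⟨hu, hv⟩
    · exact intermediate_value_Icc' huv hf ⟨hv, hu⟩
    · exact intermediate_value_Icc huv hf ⟨hu, hv⟩
  exact h0 x hx hfx

theorem AnalyticAt.eventually_pos_neg_one_pow_mul {f : ℝ → ℝ} {x : ℝ} (hf : AnalyticAt ℝ f x)
    (hx : analyticOrderAt f x ≠ ⊤) :
    ∀ᶠ p in 𝓝[<] x ×ˢ 𝓝[>] x, 0 < (-1) ^ analyticOrderNatAt f x * (f p.1 * f p.2) := by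
  obtain ⟨g, hg, hgx, hfg⟩ := hf.analyticOrderAt_ne_top.mp hx
  set n := analyticOrderNatAt f x
  have hnear : ∀ᶠ y in 𝓝 x, f y = (y - x) ^ n * g y ∧ 0 < g y * g x :=
    hfg.and <| (hg.continuousAt.mul continuousAt_const).eventually
      (lt_mem_nhds (mul_self_pos.mpr hgx))
  filter_upwards [(hnear.filter_mono nhdsWithin_le_nhds).prod_mk
    (hnear.filter_mono nhdsWithin_le_nhds),
    prod_mem_prod self_mem_nhdsWithin self_mem_nhdsWithin] with ⟨y, z⟩ ⟨⟨hfy, hgy⟩, hfz, hgz⟩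
    ⟨hyx, hxz⟩
  dsimp only at hfy hgy hfz hgz hyx hxz
  have hyz : 0 < g y * g z := pos_of_mul_pos_left (a := g y * g z) (b := g x * g x)
    (by nlinarith [mul_pos hgy hgz]) (mul_self_nonneg _)
  have key : (-1) ^ n * (f y * f z) = ((x - y) * (z - x)) ^ n * (g y * g z) := by
    rw [hfy, hfz, mul_pow, show x - y = -1 * (y - x) by ring, mul_pow]; ring
  rw [key]
  exact mul_pos (pow_pos (mul_pos (sub_pos.mpr hyx) (sub_pos.mpr hxz)) n) hyz

/-- Junk values: the sum is `0` if `s` contains infinitely many zeros of `f`, and a zero near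
which `f` vanishes identically contributes `0`. -/
noncomputable def zeroCount (f : ℝ → ℝ) (s : Set ℝ) : ℕ := ∑ᶠ x ∈ s, analyticOrderNatAt f x

section ZeroCount

variable {f : ℝ → ℝ} {s t : Set ℝ} {x : ℝ}

theorem zeroCount_eq_sum {T : Finset ℝ} (h : {x ∈ s | f x = 0} = T) :
    zeroCount f s = ∑ x ∈ T, analyticOrderNatAt f x :=
  finsum_mem_eq_sum_of_inter_support_eq _ <| by
    rw [← h, show {x ∈ s | f x = 0} = s ∩ f ⁻¹' {0} from rfl, inter_assoc,
      inter_eq_right.mpr support_analyticOrderNatAt_subset]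

theorem zeroCount_union (hst : Disjoint s t) (hfin : {x ∈ s ∪ t | f x = 0}.Finite) :
    zeroCount f (s ∪ t) = zeroCount f s + zeroCount f t :=
  finsum_mem_union' hst
    (hfin.subset fun _ hx ↦ ⟨.inl hx.1, support_analyticOrderNatAt_subset hx.2⟩)
    (hfin.subset fun _ hx ↦ ⟨.inr hx.1, support_analyticOrderNatAt_subset hx.2⟩)

theorem zeroCount_insert_of_ne_zero (hx : f x ≠ 0) : zeroCount f (insert x s) = zeroCount f s :=
  finsum_mem_insert_of_eq_zero_if_notMem fun _ ↦
    Function.notMem_support.mp fun h ↦ hx (support_analyticOrderNatAt_subset h)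

theorem card_le_zeroCount {S : Finset ℝ} (hS : ↑S ⊆ s)
    (hpos : ∀ x ∈ S, 0 < analyticOrderNatAt f x) (hfin : {x ∈ s | f x = 0}.Finite) :
    S.card ≤ zeroCount f s := by
  have hsplit : zeroCount f s = zeroCount f S + zeroCount f (s \ S) := by
    rw [← zeroCount_union disjoint_sdiff_right (by rwa [union_sdiff_cancel hS]),
      union_sdiff_cancel hS]
  calc S.card = ∑ _x ∈ S, 1 := by simp
    _ ≤ ∑ x ∈ S, analyticOrderNatAt f x := Finset.sum_le_sum hpos
    _ = zeroCount f S := (finsum_mem_coe_finset _ _).symm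
    _ ≤ zeroCount f s := hsplit ▸ Nat.le_add_right _ _

theorem finite_zeros_of_subset_Icc {u v : ℝ} (hf : AnalyticOnNhd ℝ f (Icc u v))
    (hne : ∃ x ∈ Icc u v, f x ≠ 0) (hs : s ⊆ Icc u v) : {x ∈ s | f x = 0}.Finite := by
  obtain ⟨x₀, hx₀, hfx₀⟩ := hne
  exact (hf.finite_zeros_of_isCompact isCompact_Icc (isConnected_Icc (hx₀.1.trans hx₀.2)) hx₀
    hfx₀).subset fun x hx ↦ ⟨hs hx.1, hx.2⟩

theorem card_le_zeroCount_of_natCast {u v : ℝ} {S : Finset ℕ}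
    (hf : AnalyticOnNhd ℝ f (Icc u v)) (hne : ∃ x ∈ Icc u v, f x ≠ 0) (hs : s ⊆ Icc u v)
    (hS : ∀ j ∈ S, (j : ℝ) ∈ s ∧ f j = 0) : S.card ≤ zeroCount f s := by
  rw [← Finset.card_image_of_injective S (Nat.cast_injective (R := ℝ))]
  refine card_le_zeroCount ?_ ?_ (finite_zeros_of_subset_Icc hf hne hs)
  · simpa [Set.subset_def] using fun j hj ↦ (hS j hj).1
  · simp only [Finset.mem_image, forall_exists_index, and_imp, forall_apply_eq_imp_iff₂]
    intro j hj
    obtain ⟨x₀, hx₀, hfx₀⟩ := hne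
    have hj' := hs (hS j hj).1
    exact (hf _ hj').analyticOrderNatAt_pos
      (hf.analyticOrderAt_ne_top_of_apply_ne_zero isPreconnected_Icc hx₀ hfx₀ hj') (hS j hj).2

end ZeroCount

theorem mul_pos_of_mul_pos_of_mul_pos {α : Type*} [CommRing α] [LinearOrder α]
    [IsStrictOrderedRing α] {a b c : α} (hab : 0 < a * b) (hbc : 0 < b * c) : 0 < a * c :=
  pos_of_mul_pos_left (b := b ^ 2) (by convert mul_pos hab hbc using 1; ring) (sq_nonneg b)

theorem AnalyticOnNhd.eventually_nhdsLT_pos_neg_one_pow_mul {f : ℝ → ℝ} {u v x : ℝ}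
    (hf : AnalyticOnNhd ℝ f (Icc u v)) (hu : f u ≠ 0) (hx : x ∈ Ioo u v)
    (hv : ∀ w ∈ Ioc x v, f w ≠ 0) :
    ∀ᶠ y in 𝓝[<] x, 0 < (-1) ^ analyticOrderNatAt f x * (f y * f v) := by
  have hxIcc := Ioo_subset_Icc_self hx
  have hord := hf.analyticOrderAt_ne_top_of_apply_ne_zero isPreconnected_Icc
    (left_mem_Icc.2 (hx.1.trans hx.2).le) hu hxIcc
  filter_upwards [((hf x hxIcc).eventually_pos_neg_one_pow_mul hord).curry] with y hy
  have hright : ∀ᶠ z in 𝓝[>] x, x < z := self_mem_nhdsWithin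
  obtain ⟨z, hyz, hxz, hzv⟩ :=
    (hy.and (hright.and ((eventually_lt_nhds hx.2).filter_mono nhdsWithin_le_nhds))).exists
  have hzv' : 0 < f z * f v :=
    (hf.continuousOn.mono (Icc_subset_Icc_left (hx.1.trans hxz).le)).mul_pos_of_forall_ne_zero
      hzv.le fun w hw ↦ hv w ⟨hxz.trans_le hw.1, hw.2⟩
  rw [← mul_assoc] at hyz ⊢
  exact mul_pos_of_mul_pos_of_mul_pos hyz hzv'

theorem sep_Ioo_eq_filter {f : ℝ → ℝ} {u v y : ℝ} {S : Finset ℝ}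
    (hS : {w ∈ Ioo u v | f w = 0} = S) (hyv : y ≤ v) :
    {w ∈ Ioo u y | f w = 0} = S.filter (· < y) := by
  ext w
  rw [Finset.coe_filter, mem_ofPred_eq, mem_ofPred_eq, ← Finset.mem_coe, ← hS]
  exact ⟨fun ⟨hw, h0⟩ ↦ ⟨⟨⟨hw.1, hw.2.trans_le hyv⟩, h0⟩, hw.2⟩,
    fun ⟨⟨hw, h0⟩, hwy⟩ ↦ ⟨⟨hw.1, hwy⟩, h0⟩⟩

theorem pos_neg_one_pow_zeroCount_mul {f : ℝ → ℝ} {u v : ℝ} (hf : AnalyticOnNhd ℝ f (Icc u v))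
    (huv : u ≤ v) (hu : f u ≠ 0) (hv : f v ≠ 0) :
    0 < (-1) ^ zeroCount f (Ioo u v) * (f u * f v) := by
  classical
  have hfin : {x ∈ Ioo u v | f x = 0}.Finite :=
    finite_zeros_of_subset_Icc hf ⟨u, left_mem_Icc.2 huv, hu⟩ Ioo_subset_Icc_self
  rw [zeroCount_eq_sum hfin.coe_toFinset.symm]
  generalize hT : hfin.toFinset = T
  replace hT : {x ∈ Ioo u v | f x = 0} = T := by rw [← hT, hfin.coe_toFinset]
  clear hfin
  induction T using Finset.induction_on_max generalizing v with
  | empty =>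
    simp only [Finset.sum_empty, pow_zero, one_mul]
    refine hf.continuousOn.mul_pos_of_forall_ne_zero huv fun x hx hx0 ↦ ?_
    rcases eq_endpoints_or_mem_Ioo_of_mem_Icc hx with rfl | rfl | hx'
    · exact hu hx0
    · exact hv hx0
    · simpa using hT.subset ⟨hx', hx0⟩
  | insert x T hTx ih =>
    have hzero : ∀ {w}, w ∈ Ioo u v → f w = 0 → w = x ∨ w ∈ T := fun hw h0 ↦ by
      simpa using hT.subset ⟨hw, h0⟩
    obtain ⟨hx, -⟩ : x ∈ Ioo u v ∧ f x = 0 := hT.symm.subset (by simp)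
    have hright : ∀ w ∈ Ioc x v, f w ≠ 0 := fun w hw h0 ↦ by
      rcases hw.2.eq_or_lt with rfl | hwv
      · exact hv h0
      rcases hzero ⟨hx.1.trans hw.1, hwv⟩ h0 with rfl | hwT
      · exact lt_irrefl _ hw.1
      · exact lt_asymm hw.1 (hTx w hwT)
    have hleft : ∀ᶠ y in 𝓝[<] x, u < y ∧ ∀ t ∈ T, t < y :=
      ((eventually_gt_nhds hx.1).and ((eventually_all_finset T).2 fun t ht ↦
        eventually_gt_nhds (hTx t ht))).filter_mono nhdsWithin_le_nhds
    obtain ⟨y, hyv, ⟨huy, hTy⟩, hyx : y < x⟩ :=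
      ((hf.eventually_nhdsLT_pos_neg_one_pow_mul hu hx hright).and
        (hleft.and self_mem_nhdsWithin)).exists
    have hzeros_uy : {t ∈ Ioo u y | f t = 0} = T := by
      rw [sep_Ioo_eq_filter hT (hyx.trans hx.2).le, Finset.filter_insert, if_neg hyx.not_gt,
        Finset.filter_true_of_mem hTy]
    have hfy : f y ≠ 0 := fun h0 ↦ by
      rcases hzero ⟨huy, hyx.trans hx.2⟩ h0 with rfl | hy
      · exact lt_irrefl _ hyx
      · exact lt_irrefl _ (hTy y hy)
    have huy' := ih (hf.mono (Icc_subset_Icc_right (hyx.trans hx.2).le)) huy.le hfy hzeros_uy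
    rw [Finset.sum_insert fun h ↦ lt_irrefl x (hTx x h), pow_add]
    set A := ∑ t ∈ T, analyticOrderNatAt f t
    set n := analyticOrderNatAt f x
    rw [show (-1) ^ n * (-1) ^ A * (f u * f v) = (-1) ^ A * f u * ((-1) ^ n * f v) by ring]
    exact mul_pos_of_mul_pos_of_mul_pos (b := f y) (by rwa [mul_assoc]) (by rwa [mul_left_comm])

theorem exists_last_ne_zero_or_forall_eq_zero {M : Type*} [Zero M] (a : ℕ → M) (m : ℕ) :
    (∃ r < m, a r ≠ 0 ∧ ∀ j, r < j → j < m → a j = 0) ∨ ∀ j < m, a j = 0 := by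
  induction m with
  | zero => exact .inr fun j hj ↦ absurd hj j.not_lt_zero
  | succ m ih =>
    by_cases ham : a m = 0
    · rcases ih with ⟨r, hrm, har, hgap⟩ | hzero
      · refine .inl ⟨r, hrm.trans m.lt_succ_self, har, fun j hrj hjm ↦ ?_⟩
        exact (Nat.lt_succ_iff.mp hjm).eq_or_lt.elim (· ▸ ham) (hgap j hrj)
      · exact .inr fun j hj ↦ (Nat.lt_succ_iff.mp hj).eq_or_lt.elim (· ▸ ham) (hzero j)
    · exact .inl ⟨m, m.lt_succ_self, ham, fun j hmj hjm ↦ absurd hjm (by omega)⟩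

noncomputable def signChangeCount (a : ℕ → ℝ) (n : ℕ) : ℕ :=
  {m | m ≤ n ∧ SignChangeAt a m}.ncard

section SignChangeCount

variable {a : ℕ → ℝ} {r m : ℕ}

theorem signChangeCount_mono (h : r ≤ m) : signChangeCount a r ≤ signChangeCount a m :=
  ncard_le_ncard (fun _ hk ↦ ⟨hk.1.trans h, hk.2⟩) ((finite_Iic m).subset fun _ hk ↦ hk.1)

theorem signChangeCount_lt (h : r < m) (hm : SignChangeAt a m) :
    signChangeCount a r < signChangeCount a m :=
  ncard_lt_ncard ⟨fun _ hk ↦ ⟨hk.1.trans h.le, hk.2⟩, fun hsub ↦ (hsub ⟨le_rfl, hm⟩).1.not_gt h⟩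
    ((finite_Iic m).subset fun _ hk ↦ hk.1)

end SignChangeCount

section Interlacing

variable {a : ℕ → ℝ} {f : ℝ → ℝ} {r m N : ℕ}

theorem apply_natCast_ne_zero (hval : f m = (-1) ^ m * a m) (ham : a m ≠ 0) : f m ≠ 0 := by
  rw [hval]
  exact mul_ne_zero (pow_ne_zero _ (by norm_num)) ham

theorem sub_one_le_zeroCount_Ioo (hrm : r < m) (hf : AnalyticOnNhd ℝ f (Icc r m))
    (hval : ∀ n, r ≤ n → n ≤ m → f n = (-1) ^ n * a n) (har : a r ≠ 0)
    (hgap : ∀ j, r < j → j < m → a j = 0) : m - r - 1 ≤ zeroCount f (Ioo r m) := by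
  have hr : (r : ℝ) ∈ Icc (r : ℝ) m := left_mem_Icc.2 (by exact_mod_cast hrm.le)
  simpa using card_le_zeroCount_of_natCast (S := Finset.Ioo r m) hf
    ⟨r, hr, apply_natCast_ne_zero (hval r le_rfl hrm.le) har⟩ Ioo_subset_Icc_self fun j hj ↦ by
      rw [Finset.mem_Ioo] at hj
      refine ⟨⟨by exact_mod_cast hj.1, by exact_mod_cast hj.2⟩, ?_⟩
      rw [hval j hj.1.le hj.2.le, hgap j hj.1 hj.2, mul_zero]

theorem sub_le_zeroCount_Ioo_of_not_signChangeAt (hrm : r < m) (hf : AnalyticOnNhd ℝ f (Icc r m))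
    (hval : ∀ n, r ≤ n → n ≤ m → f n = (-1) ^ n * a n) (har : a r ≠ 0) (ham : a m ≠ 0)
    (hgap : ∀ j, r < j → j < m → a j = 0) (hsc : ¬SignChangeAt a m) :
    m - r ≤ zeroCount f (Ioo r m) := by
  have hlow := sub_one_le_zeroCount_Ioo hrm hf hval har hgap
  have hpos : 0 < a r * a m :=
    (mul_ne_zero har ham).lt_or_gt.resolve_left fun h ↦ hsc ⟨r, hrm, h, hgap⟩
  have hsign := pos_neg_one_pow_zeroCount_mul hf (by exact_mod_cast hrm.le)
    (apply_natCast_ne_zero (hval r le_rfl hrm.le) har)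
    (apply_natCast_ne_zero (hval m hrm.le le_rfl) ham)
  set Z := zeroCount f (Ioo r m)
  rw [hval r le_rfl hrm.le, hval m hrm.le le_rfl,
    show (-1) ^ Z * ((-1) ^ r * a r * ((-1) ^ m * a m)) = (-1) ^ (Z + r + m) * (a r * a m) by ring]
    at hsign
  have heven : Even (Z + r + m) := by
    by_contra hodd
    rw [(Nat.not_even_iff_odd.mp hodd).neg_one_pow] at hsign
    linarith
  rw [Nat.even_iff] at heven
  omega

theorem le_zeroCount_Ico_add_signChangeCount (hf : AnalyticOnNhd ℝ f (Icc 0 m))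
    (hval : ∀ n ≤ m, f n = (-1) ^ n * a n) (ham : a m ≠ 0) :
    m ≤ zeroCount f (Ico 0 m) + signChangeCount a m := by
  induction m using Nat.strong_induction_on with
  | _ m ih =>
  have hfm := apply_natCast_ne_zero (hval m le_rfl) ham
  have hne : ∃ x ∈ Icc (0 : ℝ) m, f x ≠ 0 := ⟨m, right_mem_Icc.2 m.cast_nonneg, hfm⟩
  rcases exists_last_ne_zero_or_forall_eq_zero a m with ⟨r, hrm, har, hgap⟩ | hzero
  · have hrm' : (r : ℝ) < m := by exact_mod_cast hrm
    have hfr := apply_natCast_ne_zero (hval r hrm.le) har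
    have hIH := ih r hrm (hf.mono (Icc_subset_Icc_right hrm'.le))
      (fun n hn ↦ hval n (hn.trans hrm.le)) har
    have hsplit : zeroCount f (Ico 0 m) = zeroCount f (Ico 0 r) + zeroCount f (Ioo r m) := by
      have hfin := finite_zeros_of_subset_Icc hf hne (s := Ico 0 m) Ico_subset_Icc_self
      rw [← Ico_union_Ico_eq_Ico r.cast_nonneg hrm'.le] at hfin ⊢
      rw [zeroCount_union Ico_disjoint_Ico_same hfin, ← Ioo_insert_left hrm',
        zeroCount_insert_of_ne_zero hfr]
    have hf' : AnalyticOnNhd ℝ f (Icc r m) := hf.mono (Icc_subset_Icc_left r.cast_nonneg)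
    have hval' : ∀ n, r ≤ n → n ≤ m → f n = (-1) ^ n * a n := fun n _ hn ↦ hval n hn
    by_cases hsc : SignChangeAt a m
    · have := signChangeCount_lt hrm hsc
      have := sub_one_le_zeroCount_Ioo hrm hf' hval' har hgap
      omega
    · have := signChangeCount_mono (a := a) hrm.le
      have := sub_le_zeroCount_Ioo_of_not_signChangeAt hrm hf' hval' har ham hgap hsc
      omega
  · have := card_le_zeroCount_of_natCast (S := Finset.range m) hf hne Ico_subset_Icc_self
      fun j hj ↦ by
        rw [Finset.mem_range] at hj
        refine ⟨⟨j.cast_nonneg, by exact_mod_cast hj⟩, ?_⟩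
        rw [hval j hj.le, hzero j hj, mul_zero]
    rw [Finset.card_range] at this
    omega

theorem le_zeroCount_Icc_add_signChangeCount (hf : AnalyticOnNhd ℝ f (Icc 0 N))
    (hne : ∃ x ∈ Icc (0 : ℝ) N, f x ≠ 0) (hval : ∀ n ≤ N, f n = (-1) ^ n * a n) :
    N ≤ zeroCount f (Icc 0 N) + signChangeCount a N := by
  rcases exists_last_ne_zero_or_forall_eq_zero a (N + 1) with ⟨L, hLN, haL, hgap⟩ | hzero
  · replace hLN := Nat.lt_succ_iff.mp hLN
    have hLN' : (L : ℝ) ≤ N := by exact_mod_cast hLN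
    have hfL := apply_natCast_ne_zero (hval L hLN) haL
    have hhead := le_zeroCount_Ico_add_signChangeCount (hf.mono (Icc_subset_Icc_right hLN'))
      (fun n hn ↦ hval n (hn.trans hLN)) haL
    have hsplit : zeroCount f (Icc 0 N) = zeroCount f (Ico 0 L) + zeroCount f (Ioc L N) := by
      have hfin := finite_zeros_of_subset_Icc hf hne (s := Icc 0 N) subset_rfl
      rw [← Ico_union_Icc_eq_Icc L.cast_nonneg hLN'] at hfin ⊢
      rw [zeroCount_union (disjoint_left.2 fun _ h₁ h₂ ↦ h₁.2.not_ge h₂.1) hfin,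
        ← Ioc_insert_left hLN', zeroCount_insert_of_ne_zero hfL]
    have htail := card_le_zeroCount_of_natCast (S := Finset.Ioc L N) hf hne
      (Ioc_subset_Icc_self.trans (Icc_subset_Icc_left L.cast_nonneg)) fun j hj ↦ by
        rw [Finset.mem_Ioc] at hj
        refine ⟨⟨by exact_mod_cast hj.1, by exact_mod_cast hj.2⟩, ?_⟩
        rw [hval j hj.2, hgap j hj.1 (Nat.lt_succ_of_le hj.2), mul_zero]
    have := signChangeCount_mono (a := a) hLN
    rw [Nat.card_Ioc] at htail
    omega
  · have := card_le_zeroCount_of_natCast (S := Finset.range (N + 1)) hf hne subset_rfl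
      fun j hj ↦ by
        rw [Finset.mem_range] at hj
        refine ⟨⟨j.cast_nonneg, by exact_mod_cast Nat.lt_succ_iff.mp hj⟩, ?_⟩
        rw [hval j (Nat.lt_succ_iff.mp hj), hzero j hj, mul_zero]
    rw [Finset.card_range] at this
    omega

end Interlacing

/-- Lemma 4: for a real analytic `f` on `[0, N]`, not identically zero, with
`f n = (-1)^n a n`, the number of zeros of `f` on `[0, N]` counted with
multiplicities is at least `N` minus the number of sign changes of `a`. -/
theorem zeros_ge_N_sub_signChanges (N : ℕ) (a : ℕ → ℝ) (f : ℝ → ℝ)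
    (hf : AnalyticOnNhd ℝ f (Set.Icc (0 : ℝ) N))
    (hne : ∃ x ∈ Set.Icc (0 : ℝ) N, f x ≠ 0)
    (hval : ∀ n : ℕ, n ≤ N → f n = (-1 : ℝ) ^ n * a n) :
    ∃ (Z : Finset ℝ) (mult : ℝ → ℕ),
      (∀ x ∈ Z, x ∈ Set.Icc (0 : ℝ) N ∧ f x = 0 ∧ ZeroMult f x (mult x)) ∧
      (N : ℤ) - ({m | m ≤ N ∧ SignChangeAt a m}.ncard : ℤ) ≤ (∑ x ∈ Z, mult x : ℤ) := by
  have hfin := finite_zeros_of_subset_Icc hf hne subset_rfl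
  have hbound := le_zeroCount_Icc_add_signChangeCount hf hne hval
  rw [zeroCount_eq_sum hfin.coe_toFinset.symm, signChangeCount] at hbound
  refine ⟨hfin.toFinset, analyticOrderNatAt f, fun x hx ↦ ?_, ?_⟩
  · obtain ⟨hxI, hfx⟩ := hfin.mem_toFinset.mp hx
    obtain ⟨x₀, hx₀, hfx₀⟩ := hne
    exact ⟨hxI, hfx, (hf x hxI).zeroMult
      (hf.analyticOrderAt_ne_top_of_apply_ne_zero isPreconnected_Icc hx₀ hfx₀ hxI)⟩
  · have := (Nat.cast_le (α := ℤ)).mpr hbound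
    push_cast at this
    linarith
end

section
/- Let (a_k, ..., a_n) be real numbers with a_k ≠ 0, a_n ≠ 0, and a_j = 0 for all k < j < n, and suppose a_k * a_n > 0. If f is a real analytic function on [k, n], not identically zero, with f(j) = (-1)^j * a_j for integers k ≤ j ≤ n, then f has at least n - k zeros (with multiplicity) in the open interval (k, n). -/
/-!
The function `f` vanishes at the `n - k - 1` integers `j` strictly between `k` and `n`. Dividing
by `P(x) = ∏ j, (x - j)` gives a function `g` on `[k, n]` that is continuous once its value at
each `j` is set to `f'(j) / P'(j)`. Since `P(k) P(n)` has the sign of `(-1)^(n-k-1)` while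
`f(k) f(n)` has the sign of `(-1)^(n-k)`, `g` changes sign, so it vanishes at some `c ∈ (k, n)`.
Either `c` is not an integer, and is one more zero of `f`, or `f'(c) = 0` at an integer `c`, which
is then a zero of multiplicity at least two.
-/

open Filter Topology Set

lemma exists_mem_Ioo_eq_zero_of_mul_neg {α : Type*} [ConditionallyCompleteLinearOrder α]
    [TopologicalSpace α] [OrderTopology α] [DenselyOrdered α] {a b : α} {g : α → ℝ}
    (hab : a ≤ b) (hg : ContinuousOn g (Icc a b)) (h : g a * g b < 0) :
    ∃ c ∈ Ioo a b, g c = 0 := by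
  rcases mul_neg_iff.mp h with ⟨ha, hb⟩ | ⟨ha, hb⟩
  · exact intermediate_value_Ioo' hab hg ⟨hb, ha⟩
  · exact intermediate_value_Ioo hab hg ⟨ha, hb⟩

lemma Finset.card_add_one_le_sum_insert {α : Type*} [DecidableEq α] {s : Finset α} {c : α}
    {m : α → ℕ} (h₁ : ∀ x ∈ insert c s, 1 ≤ m x) (h₂ : c ∈ s → 2 ≤ m c) :
    s.card + 1 ≤ ∑ x ∈ insert c s, m x := by
  have hsum : ∀ t ⊆ insert c s, t.card ≤ ∑ x ∈ t, m x := fun t ht => by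
    simpa using Finset.card_nsmul_le_sum t m 1 fun x hx => h₁ x (ht hx)
  by_cases hc : c ∈ s
  · rw [Finset.insert_eq_of_mem hc, ← Finset.add_sum_erase s m hc]
    have := hsum (s.erase c) ((Finset.erase_subset c s).trans (Finset.subset_insert c s))
    have := Finset.card_erase_add_one hc
    have := h₂ hc
    omega
  · rw [← Finset.card_insert_of_notMem hc]
    exact hsum _ subset_rfl

section AnalyticOrder

variable {𝕜 E : Type*} [NontriviallyNormedField 𝕜] [NormedAddCommGroup E] [NormedSpace 𝕜 E]
  {f : 𝕜 → E} {x : 𝕜}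

lemma AnalyticAt.one_le_analyticOrderNatAt (hf : AnalyticAt 𝕜 f x)
    (hfin : analyticOrderAt f x ≠ ⊤) (h₀ : f x = 0) : 1 ≤ analyticOrderNatAt f x := by
  rw [← Nat.cast_le (α := ℕ∞), Nat.cast_analyticOrderNatAt hfin, Nat.cast_one]
  exact Order.one_le_iff_ne_zero.mpr (analyticOrderAt_ne_zero.mpr ⟨hf, h₀⟩)

lemma AnalyticAt.two_le_analyticOrderNatAt [CharZero 𝕜] [CompleteSpace E] (hf : AnalyticAt 𝕜 f x)
    (hfin : analyticOrderAt f x ≠ ⊤) (h₀ : f x = 0) (h₁ : deriv f x = 0) :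
    2 ≤ analyticOrderNatAt f x := by
  have hderiv : analyticOrderAt (deriv f) x + 1 = analyticOrderAt f x := by
    simpa [h₀] using hf.analyticOrderAt_deriv_add_one
  have : 1 ≤ analyticOrderAt (deriv f) x :=
    Order.one_le_iff_ne_zero.mpr (analyticOrderAt_ne_zero.mpr ⟨hf.deriv, h₁⟩)
  rw [← Nat.cast_le (α := ℕ∞), Nat.cast_analyticOrderNatAt hfin, ← hderiv, Nat.cast_ofNat,
    ← one_add_one_eq_two]
  gcongr

lemma AnalyticOnNhd.analyticOrderAt_ne_top_of_exists_ne_zero {U : Set 𝕜}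
    (hf : AnalyticOnNhd 𝕜 f U) (hU : IsPreconnected U) (hne : ∃ x ∈ U, f x ≠ 0) {y : 𝕜}
    (hy : y ∈ U) : analyticOrderAt f y ≠ ⊤ := by
  obtain ⟨x, hx, hfx⟩ := hne
  refine hf.analyticOrderAt_ne_top_of_isPreconnected hU hx hy ?_
  rw [(hf x hx).analyticOrderAt_eq_zero.mpr hfx]
  exact ENat.zero_ne_top

end AnalyticOrder

lemma zeroMult_analyticOrderNatAt {f : ℝ → ℝ} {x : ℝ} (hf : AnalyticAt ℝ f x)
    (h : analyticOrderAt f x ≠ ⊤) : ZeroMult f x (analyticOrderNatAt f x) := by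
  obtain ⟨g, hg, hgx, hfg⟩ := hf.analyticOrderAt_ne_top.mp h
  exact ⟨g, hg, hgx, hfg⟩

lemma prod_sub_ne_zero_of_notMem {T : Finset ℝ} {y : ℝ} (hy : y ∉ T) : ∏ s ∈ T, (y - s) ≠ 0 :=
  Finset.prod_ne_zero_iff.mpr fun _ hs => sub_ne_zero.mpr fun h => hy (h ▸ hs)

lemma neg_one_pow_card_mul_prod_sub_mul_prod_sub_pos {S : Finset ℝ} {a b : ℝ}
    (hS : ∀ s ∈ S, s ∈ Ioo a b) :
    0 < (-1) ^ S.card * ((∏ s ∈ S, (a - s)) * ∏ s ∈ S, (b - s)) := by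
  have ha : ∏ s ∈ S, (a - s) = (-1) ^ S.card * ∏ s ∈ S, (s - a) := by
    rw [← Finset.prod_const, ← Finset.prod_mul_distrib]
    exact Finset.prod_congr rfl fun _ _ => by ring
  rw [ha, ← mul_assoc, ← mul_assoc, ← pow_add, ← two_mul, pow_mul, neg_one_sq, one_pow, one_mul]
  exact mul_pos (Finset.prod_pos fun s hs => sub_pos.mpr (hS s hs).1)
    (Finset.prod_pos fun s hs => sub_pos.mpr (hS s hs).2)

/-- `f / ∏ s ∈ S, (· - s)`, extended to `S` by its limits when `f` vanishes on `S`. -/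
noncomputable def divProdSub (f : ℝ → ℝ) (S : Finset ℝ) (y : ℝ) : ℝ :=
  if y ∈ S then deriv f y / ∏ s ∈ S.erase y, (y - s) else f y / ∏ s ∈ S, (y - s)

section DivProdSub

variable {f : ℝ → ℝ} {S : Finset ℝ}

lemma divProdSub_of_mem {y : ℝ} (hy : y ∈ S) :
    divProdSub f S y = deriv f y / ∏ s ∈ S.erase y, (y - s) := if_pos hy

lemma divProdSub_of_notMem {y : ℝ} (hy : y ∉ S) :
    divProdSub f S y = f y / ∏ s ∈ S, (y - s) := if_neg hy

lemma eventually_notMem_finset (T : Finset ℝ) {y : ℝ} (hy : y ∉ T) : ∀ᶠ z in 𝓝 y, z ∉ T :=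
  T.finite_toSet.isClosed.isOpen_compl.mem_nhds hy

lemma continuousWithinAt_divProdSub_of_notMem {t : Set ℝ} {y : ℝ} (hf : ContinuousWithinAt f t y)
    (hy : y ∉ S) : ContinuousWithinAt (divProdSub f S) t y := by
  have hP : ContinuousWithinAt (fun z => ∏ s ∈ S, (z - s)) t y := by fun_prop
  refine (hf.div hP (prod_sub_ne_zero_of_notMem hy)).congr_of_eventuallyEq ?_
    (divProdSub_of_notMem hy)
  exact nhdsWithin_le_nhds <|
    (eventually_notMem_finset S hy).mono fun z hz => divProdSub_of_notMem hz

lemma continuousAt_divProdSub_of_mem {x : ℝ} (hf : DifferentiableAt ℝ f x) (hx : x ∈ S)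
    (hfx : f x = 0) : ContinuousAt (divProdSub f S) x := by
  set Q : ℝ → ℝ := fun z => ∏ s ∈ S.erase x, (z - s)
  have hQx : Q x ≠ 0 := prod_sub_ne_zero_of_notMem (Finset.notMem_erase x S)
  have hslope : Tendsto (fun z => slope f x z / Q z) (𝓝[≠] x) (𝓝 (deriv f x / Q x)) :=
    (hasDerivAt_iff_tendsto_slope.mp hf.hasDerivAt).div
      ((show Continuous Q by fun_prop).continuousAt.tendsto.mono_left nhdsWithin_le_nhds) hQx
  have heq : ∀ᶠ z in 𝓝[≠] x, slope f x z / Q z = divProdSub f S z := by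
    filter_upwards [nhdsWithin_le_nhds (eventually_notMem_finset _ (Finset.notMem_erase x S)),
      self_mem_nhdsWithin] with z hz hzx
    have hzS : z ∉ S := fun h => hz (Finset.mem_erase.mpr ⟨hzx, h⟩)
    rw [divProdSub_of_notMem hzS, ← Finset.mul_prod_erase S _ hx, slope_def_field, hfx, sub_zero,
      div_div]
  rw [← continuousWithinAt_compl_self, ContinuousWithinAt, divProdSub_of_mem hx]
  exact hslope.congr' heq

end DivProdSub

lemma exists_extra_zero_of_neg_one_pow_card_mul_neg {f : ℝ → ℝ} {S : Finset ℝ} {a b : ℝ}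
    (hab : a ≤ b) (hf : ContinuousOn f (Icc a b)) (hdiff : ∀ s ∈ S, DifferentiableAt ℝ f s)
    (hS : ∀ s ∈ S, s ∈ Ioo a b) (hzero : ∀ s ∈ S, f s = 0)
    (hsign : (-1) ^ S.card * (f a * f b) < 0) :
    ∃ c ∈ Ioo a b, f c = 0 ∧ (c ∈ S → deriv f c = 0) := by
  have hcont : ContinuousOn (divProdSub f S) (Icc a b) := fun y hy => by
    by_cases hyS : y ∈ S
    · exact (continuousAt_divProdSub_of_mem (hdiff y hyS) hyS (hzero y hyS)).continuousWithinAt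
    · exact continuousWithinAt_divProdSub_of_notMem (hf y hy) hyS
  have haS : a ∉ S := fun h => (hS a h).1.false
  have hbS : b ∉ S := fun h => (hS b h).2.false
  have hε : ((-1 : ℝ) ^ S.card) ≠ 0 := pow_ne_zero _ (by norm_num)
  have hchange : divProdSub f S a * divProdSub f S b < 0 := by
    rw [divProdSub_of_notMem haS, divProdSub_of_notMem hbS, div_mul_div_comm,
      ← mul_div_mul_left _ _ hε]
    exact div_neg_of_neg_of_pos hsign (neg_one_pow_card_mul_prod_sub_mul_prod_sub_pos hS)
  obtain ⟨c, hc, hgc⟩ := exists_mem_Ioo_eq_zero_of_mul_neg hab hcont hchange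
  by_cases hcS : c ∈ S
  · rw [divProdSub_of_mem hcS] at hgc
    exact ⟨c, hc, hzero c hcS, fun _ => (div_eq_zero_iff.mp hgc).resolve_right
      (prod_sub_ne_zero_of_notMem (Finset.notMem_erase c S))⟩
  · rw [divProdSub_of_notMem hcS] at hgc
    exact ⟨c, hc, (div_eq_zero_iff.mp hgc).resolve_right (prod_sub_ne_zero_of_notMem hcS),
      fun h => absurd h hcS⟩

theorem zeros_ge_of_no_sign_change_general (k n : ℕ) (hkn : k < n) (a : ℕ → ℝ)
    (hmid : ∀ j, k < j → j < n → a j = 0)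
    (hpos : a k * a n > 0) (f : ℝ → ℝ)
    (hf : AnalyticOnNhd ℝ f (Set.Icc (k : ℝ) n))
    (hne : ∃ x ∈ Set.Icc (k : ℝ) n, f x ≠ 0)
    (hval : ∀ j : ℕ, k ≤ j → j ≤ n → f j = (-1 : ℝ) ^ j * a j) :
    ∃ (Z : Finset ℝ) (mult : ℝ → ℕ),
      (∀ x ∈ Z, x ∈ Set.Ioo (k : ℝ) n ∧ f x = 0 ∧ ZeroMult f x (mult x)) ∧
      n - k ≤ ∑ x ∈ Z, mult x := by
  classical
  set S : Finset ℝ := (Finset.Ioo k n).image (Nat.cast : ℕ → ℝ)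
  have hS : ∀ s ∈ S, s ∈ Ioo (k : ℝ) n ∧ f s = 0 := by
    simp only [S, Finset.mem_image, Finset.mem_Ioo]
    rintro _ ⟨j, ⟨hkj, hjn⟩, rfl⟩
    refine ⟨⟨by exact_mod_cast hkj, by exact_mod_cast hjn⟩, ?_⟩
    rw [hval j hkj.le hjn.le, hmid j hkj hjn, mul_zero]
  have hcard : S.card = n - k - 1 := by
    rw [Finset.card_image_of_injective _ Nat.cast_injective, Nat.card_Ioo]
  have hsign : (-1) ^ S.card * (f k * f n) < 0 := by
    have hodd : Odd (n - k - 1 + k + n) := ⟨n - 1, by omega⟩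
    rw [hval k le_rfl hkn.le, hval n hkn.le le_rfl, hcard]
    calc _ = (-1 : ℝ) ^ (n - k - 1 + k + n) * (a k * a n) := by rw [pow_add, pow_add]; ring
      _ < 0 := by rw [hodd.neg_one_pow]; linarith
  obtain ⟨c, hc, hfc, hcS⟩ := exists_extra_zero_of_neg_one_pow_card_mul_neg
    (by exact_mod_cast hkn.le) hf.continuousOn
    (fun s hs => (hf s (Ioo_subset_Icc_self (hS s hs).1)).differentiableAt)
    (fun s hs => (hS s hs).1) (fun s hs => (hS s hs).2) hsign
  have hZ : ∀ x ∈ insert c S, x ∈ Ioo (k : ℝ) n ∧ f x = 0 := by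
    simpa only [Finset.mem_insert, forall_eq_or_imp] using ⟨⟨hc, hfc⟩, hS⟩
  have hord : ∀ x ∈ insert c S, AnalyticAt ℝ f x ∧ analyticOrderAt f x ≠ ⊤ := fun x hx =>
    have hx' := Ioo_subset_Icc_self (hZ x hx).1
    ⟨hf x hx', hf.analyticOrderAt_ne_top_of_exists_ne_zero isPreconnected_Icc hne hx'⟩
  refine ⟨insert c S, analyticOrderNatAt f, fun x hx => ⟨(hZ x hx).1, (hZ x hx).2,
    zeroMult_analyticOrderNatAt (hord x hx).1 (hord x hx).2⟩, ?_⟩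
  obtain ⟨hfc', hcfin⟩ := hord c (Finset.mem_insert_self c S)
  calc n - k = S.card + 1 := by omega
    _ ≤ _ := Finset.card_add_one_le_sum_insert
      (fun x hx => (hord x hx).1.one_le_analyticOrderNatAt (hord x hx).2 (hZ x hx).2)
      (fun hcS' => hfc'.two_le_analyticOrderNatAt hcfin hfc (hcS hcS'))

/-- If `a k ≠ 0`, `a n ≠ 0`, `a j = 0` for `k < j < n`, and `a k * a n > 0`,
then any real analytic `f` on `[k, n]`, not identically zero, with
`f j = (-1)^j a j`, has at least `n - k` zeros with multiplicity in `(k, n)`. -/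
theorem zeros_ge_of_no_sign_change (k n : ℕ) (hkn : k < n) (a : ℕ → ℝ)
    (hak : a k ≠ 0) (han : a n ≠ 0) (hmid : ∀ j, k < j → j < n → a j = 0)
    (hpos : a k * a n > 0) (f : ℝ → ℝ)
    (hf : AnalyticOnNhd ℝ f (Set.Icc (k : ℝ) n))
    (hne : ∃ x ∈ Set.Icc (k : ℝ) n, f x ≠ 0)
    (hval : ∀ j : ℕ, k ≤ j → j ≤ n → f j = (-1 : ℝ) ^ j * a j) :
    ∃ (Z : Finset ℝ) (mult : ℝ → ℕ),
      (∀ x ∈ Z, x ∈ Set.Ioo (k : ℝ) n ∧ f x = 0 ∧ ZeroMult f x (mult x)) ∧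
      n - k ≤ ∑ x ∈ Z, mult x :=
  zeros_ge_of_no_sign_change_general k n hkn a hmid hpos f hf hne hval
end

section
/- For a set Λ of non-negative integers with counting function n(x, Λ) = #(Λ ∩ [0, x]), the function r ↦ liminf_{x→∞} (n((1+r)x, Λ) − n(x, Λ))/(r x) has a limit as r → 0⁺, i.e., the minimum density D̲₂(Λ) = lim_{r→0⁺} liminf_{x→∞} (n((1+r)x, Λ) − n(x, Λ))/(r x) exists. -/
open Filter

/-- Counting function `n(x, Λ) = #(Λ ∩ [0, x])`. -/
noncomputable def countFn (Λ : Set ℕ) (x : ℝ) : ℕ :=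
  {m ∈ Λ | (m : ℝ) ≤ x}.ncard

/-- Local density of `Λ` on the window `(x, (1+r)x]`. -/
noncomputable def windowRatio (Λ : Set ℕ) (r x : ℝ) : ℝ :=
  ((countFn Λ ((1 + r) * x) : ℝ) - countFn Λ x) / (r * x)

/-- `liminf` as `x → ∞` of the local density at window parameter `r`. -/
noncomputable def lowerWindow (Λ : Set ℕ) (r : ℝ) : ℝ :=
  liminf (fun x : ℝ => windowRatio Λ r x) atTop

/-- `limsup` as `x → ∞` of the local density at window parameter `r`. -/
noncomputable def upperWindow (Λ : Set ℕ) (r : ℝ) : ℝ :=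
  limsup (fun x : ℝ => windowRatio Λ r x) atTop

/-- `Λ` is measurable with density `d`. -/
def HasDensity (Λ : Set ℕ) (d : ℝ) : Prop :=
  Tendsto (fun x : ℝ => (countFn Λ x : ℝ) / x) atTop (nhds d)


lemma countFn_finite (Λ : Set ℕ) (x : ℝ) : {m ∈ Λ | (m : ℝ) ≤ x}.Finite := by
  apply (Set.finite_Iic (⌊x⌋₊)).subset
  rintro m ⟨-, hm⟩
  exact Nat.le_floor hm

lemma countFn_mono (Λ : Set ℕ) {x y : ℝ} (h : x ≤ y) : countFn Λ x ≤ countFn Λ y := by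
  apply Set.ncard_le_ncard _ (countFn_finite Λ y)
  rintro m ⟨h1, h2⟩; exact ⟨h1, h2.trans h⟩

lemma countFn_bound (Λ : Set ℕ) {x y : ℝ} (hx : 0 ≤ x) (h : x ≤ y) :
    (countFn Λ y : ℝ) ≤ countFn Λ x + (y - x) + 1 := by
  have hsub : {m ∈ Λ | (m : ℝ) ≤ y} ⊆ {m ∈ Λ | (m : ℝ) ≤ x} ∪ Set.Ioc ⌊x⌋₊ ⌊y⌋₊ := by
    rintro m ⟨h1, h2⟩
    rcases le_or_gt (m : ℝ) x with hc | hc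
    · exact Or.inl ⟨h1, hc⟩
    · refine Or.inr ⟨?_, Nat.le_floor h2⟩
      by_contra hcon
      push_neg at hcon
      exact absurd ((Nat.cast_le.2 hcon).trans (Nat.floor_le hx)) (not_le.2 hc)
  have h1 : countFn Λ y ≤ countFn Λ x + (Set.Ioc ⌊x⌋₊ ⌊y⌋₊).ncard := by
    refine (Set.ncard_le_ncard hsub ((countFn_finite Λ x).union (Set.finite_Ioc _ _))).trans
      (Set.ncard_union_le _ _)
  have h2 : (Set.Ioc ⌊x⌋₊ ⌊y⌋₊).ncard = ⌊y⌋₊ - ⌊x⌋₊ := by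
    rw [← Finset.coe_Ioc, Set.ncard_coe_finset, Nat.card_Ioc]
  have h3 : ((⌊y⌋₊ - ⌊x⌋₊ : ℕ) : ℝ) ≤ (y - x) + 1 := by
    have : ((⌊y⌋₊ - ⌊x⌋₊ : ℕ) : ℝ) ≤ (⌊y⌋₊ : ℝ) - (⌊x⌋₊ : ℝ) ∨
        ((⌊y⌋₊ - ⌊x⌋₊ : ℕ) : ℝ) = 0 := by
      rcases le_or_gt ⌊x⌋₊ ⌊y⌋₊ with hc | hc
      · left; rw [Nat.cast_sub hc]
      · right; simp [Nat.sub_eq_zero_of_le hc.le]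
    rcases this with hle | h0
    · have := Nat.floor_le (hx.trans h)
      have := Nat.lt_floor_add_one x
      linarith
    · rw [h0]; linarith
  calc (countFn Λ y : ℝ) ≤ countFn Λ x + ((⌊y⌋₊ - ⌊x⌋₊ : ℕ) : ℝ) := by
        rw [← h2]; exact_mod_cast h1
    _ ≤ countFn Λ x + (y - x) + 1 := by linarith

lemma windowRatio_bounds (Λ : Set ℕ) {r : ℝ} (hr : 0 < r) :
    ∀ᶠ x in atTop, 0 ≤ windowRatio Λ r x ∧ windowRatio Λ r x ≤ 2 := by
  filter_upwards [eventually_ge_atTop (max 1 (1/r))] with x hx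
  have hx1 : (1:ℝ) ≤ x := le_trans (le_max_left _ _) hx
  have hxr : 1/r ≤ x := le_trans (le_max_right _ _) hx
  have hx0 : (0:ℝ) < x := lt_of_lt_of_le one_pos hx1
  have hrx : 1 ≤ r * x := by
    rw [div_le_iff₀ hr] at hxr; linarith [hxr]
  have hrx0 : 0 < r * x := mul_pos hr hx0
  have hle : x ≤ (1+r)*x := by nlinarith
  constructor
  · apply div_nonneg _ hrx0.le
    have := countFn_mono Λ hle
    simp only [sub_nonneg, Nat.cast_le]
    exact this
  · rw [windowRatio, div_le_iff₀ hrx0]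
    have := countFn_bound Λ hx0.le hle
    have h2 : (1+r)*x - x = r*x := by ring
    rw [h2] at this
    linarith

lemma isBoundedUnder_le_windowRatio (Λ : Set ℕ) {r : ℝ} (hr : 0 < r) :
    IsBoundedUnder (· ≤ ·) atTop (fun x : ℝ => windowRatio Λ r x) :=
  ⟨2, (windowRatio_bounds Λ hr).mono fun _ h => h.2⟩

lemma isBoundedUnder_ge_windowRatio (Λ : Set ℕ) {r : ℝ} (hr : 0 < r) :
    IsBoundedUnder (· ≥ ·) atTop (fun x : ℝ => windowRatio Λ r x) :=
  ⟨0, (windowRatio_bounds Λ hr).mono fun _ h => h.1⟩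

lemma lowerWindow_nonneg (Λ : Set ℕ) {r : ℝ} (hr : 0 < r) : 0 ≤ lowerWindow Λ r :=
  le_liminf_of_le ((isBoundedUnder_le_windowRatio Λ hr).isCoboundedUnder_ge)
    ((windowRatio_bounds Λ hr).mono fun _ h => h.1)

lemma lowerWindow_le_two (Λ : Set ℕ) {r : ℝ} (hr : 0 < r) : lowerWindow Λ r ≤ 2 :=
  liminf_le_of_le (isBoundedUnder_ge_windowRatio Λ hr)
    (fun b hb => by
      obtain ⟨x, hx1, hx2⟩ := (hb.and ((windowRatio_bounds Λ hr).mono fun _ h => h.2)).exists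
      exact hx1.trans hx2)

lemma window_chain (Λ : Set ℕ) {s r x a : ℝ} (hs : 0 < s) (hsr : s < r) (hx : 0 < x)
    {k : ℕ} (hk : (1+s)^k ≤ 1+r)
    (ha : ∀ i < k, a < windowRatio Λ s ((1+s)^i * x)) :
    a * (((1+s)^k - 1) / r) ≤ windowRatio Λ r x := by
  have hr : 0 < r := hs.trans hsr
  set g : ℕ → ℝ := fun i => (countFn Λ ((1+s)^i * x) : ℝ) with hg
  have hstep : ∀ i ∈ Finset.range k, a * (s * ((1+s)^i * x)) ≤ g (i+1) - g i := by
    intro i hi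
    have hxi : 0 < (1+s)^i * x := mul_pos (pow_pos (by linarith) i) hx
    have h := (ha i (Finset.mem_range.mp hi)).le
    rw [windowRatio, le_div_iff₀ (mul_pos hs hxi)] at h
    rw [show (1+s)*((1+s)^i*x) = (1+s)^(i+1)*x from by ring] at h
    calc a * (s * ((1+s)^i * x)) = a * (s * ((1+s)^i * x)) := rfl
      _ ≤ g (i+1) - g i := by
          have : a * (s * ((1 + s) ^ i * x)) = a * (s * ((1 + s) ^ i * x)) := rfl
          simpa [hg, mul_comm, mul_assoc, mul_left_comm] using h
  have hsum := Finset.sum_le_sum hstep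
  rw [Finset.sum_range_sub g] at hsum
  have hgeom : ∑ i ∈ Finset.range k, a * (s * ((1+s)^i * x)) = a * x * ((1+s)^k - 1) := by
    have h1 : ∑ i ∈ Finset.range k, ((1:ℝ)+s)^i = ((1+s)^k - 1)/s := by
      rw [geom_sum_eq (by intro hcon; nlinarith [hcon] : (1:ℝ)+s ≠ 1)]
      norm_num
    calc ∑ i ∈ Finset.range k, a * (s * ((1+s)^i * x))
        = (a * s * x) * ∑ i ∈ Finset.range k, ((1:ℝ)+s)^i := by
          rw [Finset.mul_sum]; exact Finset.sum_congr rfl fun i _ => by ring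
      _ = a * x * ((1+s)^k - 1) := by rw [h1]; field_simp
  rw [hgeom] at hsum
  have hmono : g k ≤ (countFn Λ ((1+r)*x) : ℝ) := by
    simp only [hg]
    exact_mod_cast countFn_mono Λ (mul_le_mul_of_nonneg_right hk hx.le)
  have h0 : g 0 = (countFn Λ x : ℝ) := by simp [hg]
  rw [windowRatio, le_div_iff₀ (mul_pos hr hx)]
  have hLHS : a * (((1+s)^k - 1)/r) * (r*x) = a * x * ((1+s)^k - 1) := by
    field_simp
  rw [hLHS]
  rw [h0] at hsum
  linarith

lemma exists_pow_window {s r : ℝ} (hs : 0 < s) (hsr : s < r) :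
    ∃ k : ℕ, (1+s)^k ≤ 1+r ∧ 1+r < (1+s)^(k+1) := by
  have hr : 0 < r := hs.trans hsr
  set P : ℕ → Prop := fun k => (1+s)^k ≤ 1+r with hP
  have hdec : DecidablePred P := fun k => Classical.dec _
  set b : ℕ := ⌊r/s⌋₊ with hb
  set k : ℕ := Nat.findGreatest P b with hk
  have hP0 : P 0 := by simp [hP]; linarith
  have hPk : P k := Nat.findGreatest_spec (Nat.zero_le b) hP0
  refine ⟨k, hPk, ?_⟩
  by_contra hcon
  push_neg at hcon
  have hbound : k + 1 ≤ b := by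
    have hber : 1 + ((k+1):ℕ) * s ≤ (1+s)^(k+1) := by
      have h := one_add_mul_le_pow (by linarith : (-2:ℝ) ≤ s) (k+1)
      have he : ((k+1:ℕ):ℝ) * s = (k+1:ℕ) * s := rfl
      push_cast
      push_cast at h
      linarith
    have hle : ((k+1):ℕ) ≤ r/s := by
      rw [le_div_iff₀ hs]
      have : (1:ℝ)+s ≤ 1+r := by linarith
      nlinarith [hcon, hber]
    exact Nat.le_floor hle
  exact Nat.findGreatest_is_greatest (Nat.lt_succ_self k) hbound hcon

lemma key_ineq (Λ : Set ℕ) {s r : ℝ} (hs : 0 < s) (hsr : s < r) {a : ℝ} (ha0 : 0 ≤ a)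
    (ha : a < lowerWindow Λ s) :
    a * ((r - s)/((1+s)*r)) ≤ lowerWindow Λ r := by
  obtain ⟨k, hk1, hk2⟩ := exists_pow_window hs hsr
  have hr : 0 < r := hs.trans hsr
  have h1s : (0:ℝ) < 1+s := by linarith
  have hbase : ∀ᶠ y in atTop, a < windowRatio Λ s y :=
    eventually_lt_of_lt_liminf ha (isBoundedUnder_ge_windowRatio Λ hs)
  have h1 : ∀ i : ℕ, ∀ᶠ x : ℝ in atTop, a < windowRatio Λ s ((1+s)^i * x) := fun i =>
    ((tendsto_const_mul_atTop_of_pos (pow_pos h1s i)).mpr tendsto_id).eventually hbase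
  have h2 : ∀ᶠ x : ℝ in atTop, ∀ i ∈ Finset.range k, a < windowRatio Λ s ((1+s)^i * x) :=
    (Finset.range k).eventually_all.mpr fun i _ => h1 i
  have hbig : ∀ᶠ x in atTop, a * (((1+s)^k - 1)/r) ≤ windowRatio Λ r x := by
    filter_upwards [h2, eventually_gt_atTop (0:ℝ)] with x h2x hx
    exact window_chain Λ hs hsr hx hk1 fun i hi => h2x i (Finset.mem_range.mpr hi)
  have hlim : a * (((1+s)^k - 1)/r) ≤ lowerWindow Λ r :=
    le_liminf_of_le ((isBoundedUnder_le_windowRatio Λ hr).isCoboundedUnder_ge) hbig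
  refine le_trans ?_ hlim
  have hpow : (r - s)/(1+s) ≤ (1+s)^k - 1 := by
    rw [div_le_iff₀ h1s]
    have hps : (1+s)^(k+1) = (1+s)^k * (1+s) := pow_succ _ _
    nlinarith [hk2]
  rw [← div_div]
  exact mul_le_mul_of_nonneg_left ((div_le_div_iff_of_pos_right hr).mpr hpow) ha0

/-- The limit defining the minimum density `D̲₂(Λ)` exists. -/
theorem minDensity_limit_exists (Λ : Set ℕ) :
    ∃ L : ℝ, Tendsto (fun r => lowerWindow Λ r) (nhdsWithin 0 (Set.Ioi 0)) (nhds L) := by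
  set l : Filter ℝ := nhdsWithin 0 (Set.Ioi 0) with hl
  have hne : l.NeBot := nhdsGT_neBot 0
  have hev : ∀ᶠ r in l, 0 ≤ lowerWindow Λ r ∧ lowerWindow Λ r ≤ 2 := by
    filter_upwards [self_mem_nhdsWithin] with r hr
    exact ⟨lowerWindow_nonneg Λ hr, lowerWindow_le_two Λ hr⟩
  have hble : IsBoundedUnder (· ≤ ·) l (fun r => lowerWindow Λ r) := ⟨2, hev.mono fun _ h => h.2⟩
  have hbge : IsBoundedUnder (· ≥ ·) l (fun r => lowerWindow Λ r) := ⟨0, hev.mono fun _ h => h.1⟩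
  set L := limsup (fun r => lowerWindow Λ r) l with hL
  have hmain : ∀ r : ℝ, 0 < r → ∀ ε : ℝ, 0 < ε → L - ε ≤ lowerWindow Λ r := by
    intro r hr ε hε
    rcases le_or_gt L ε with hc | hc
    · linarith [lowerWindow_nonneg Λ hr]
    · have hL2 : 0 < L - ε/2 := by linarith
      set t : ℝ := (L - ε)/(L - ε/2) with ht
      have ht1 : t < 1 := by rw [ht, div_lt_one hL2]; linarith
      have ht0 : 0 < t := div_pos (by linarith) hL2
      set δ : ℝ := min (r/2) (r*(1-t)/(1+t*r)) with hδ
      have h1tr : 0 < 1 + t*r := by positivity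
      have hδ0 : 0 < δ :=
        lt_min (by linarith) (div_pos (mul_pos hr (by linarith)) h1tr)
      have hδr : δ < r := lt_of_le_of_lt (min_le_left _ _) (by linarith)
      have hfreq : ∃ᶠ s in l, L - ε/2 < lowerWindow Λ s :=
        frequently_lt_of_lt_limsup (hbge.isCoboundedUnder_le) (by rw [← hL]; linarith)
      have hev2 : ∀ᶠ s in l, s ∈ Set.Ioo 0 δ :=
        Ioo_mem_nhdsGT_of_mem ⟨le_refl (0:ℝ), hδ0⟩
      obtain ⟨s, hs1, hs2⟩ := (hfreq.and_eventually hev2).exists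
      have hsr : s < r := hs2.2.trans hδr
      have hkey := key_ineq Λ hs2.1 hsr hL2.le hs1
      have hc2 : t ≤ (r - s)/((1+s)*r) := by
        have hs0 : 0 < s := hs2.1
        rw [le_div_iff₀ (by positivity : (0:ℝ) < (1+s)*r)]
        have hδle : δ ≤ r*(1-t)/(1+t*r) := min_le_right _ _
        have h2 : δ*(1+t*r) ≤ r*(1-t) := by
          rw [← le_div_iff₀ h1tr]; exact hδle
        nlinarith [hs2.2.le, h2, ht0.le, hs0.le]
      have heq : (L - ε/2) * t = L - ε := by
        rw [ht, mul_div_cancel₀ _ hL2.ne']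
      have hfinal : L - ε ≤ (L - ε/2) * ((r - s)/((1+s)*r)) := by
        rw [← heq]
        exact mul_le_mul_of_nonneg_left hc2 hL2.le
      linarith [hkey, hfinal]
  refine ⟨L, tendsto_of_le_liminf_of_limsup_le ?_ le_rfl hble hbge⟩
  have hliminf : ∀ ε : ℝ, 0 < ε → L - ε ≤ liminf (fun r => lowerWindow Λ r) l := by
    intro ε hε
    refine le_liminf_of_le (hble.isCoboundedUnder_ge) ?_
    filter_upwards [self_mem_nhdsWithin] with r hr
    exact hmain r hr ε hε
  by_contra hcon
  push_neg at hcon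
  have := hliminf ((L - liminf (fun r => lowerWindow Λ r) l)/2) (by linarith)
  linarith
end

section
/- For every set Λ of non-negative integers, the minimum density D̲₂(Λ) equals the supremum of densities of measurable subsets Λ' ⊆ Λ. -/
open Filter

/-!
A subset `Λ' ⊆ Λ` has at most as many elements as `Λ` in every window `(x, (1 + r) x]`, and if `Λ'`
has density `d` its window ratios tend to `d`; hence `d ≤ D̲₂(Λ)`.

Conversely, fix `0 ≤ t < s < D̲₂(Λ)` and let the greedy subset take `n ∈ Λ` whenever fewer than
`t (n + 1)` elements have been taken so far. Its count below `m` is at most `t m + 1`. It is also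
at least `t n + #(Λ ∩ [n, m))`, where `n ≤ m` is the last rejection time. For small `r`, all large
windows `(x, (1 + r) x]` contain at least `s r x` elements of `Λ`, and chaining windows gives
`#(Λ ∩ (a, b]) ≥ s ((1 - r) b - a)` far out. So the greedy count is at least `(t - s r) m - O(1)`,
and letting `r → 0` shows the greedy subset has density `t`.
-/

open Topology

open scoped Classical

lemma countFn_eq_count (Λ : Set ℕ) (x : ℝ) : countFn Λ x = Nat.count (· ∈ Λ) ⌊x + 1⌋₊ := by
  rw [countFn, Nat.count_eq_card_filter_range, ← Set.ncard_coe_finset]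
  congr 1
  ext m
  simp only [Set.mem_ofPred_eq, Finset.coe_filter, Finset.mem_range, Nat.lt_iff_add_one_le,
    Nat.le_floor_iff' (Nat.succ_ne_zero m)]
  push_cast
  rw [add_le_add_iff_right, and_comm]

lemma countFn_natCast_sub_one (Λ : Set ℕ) (n : ℕ) :
    countFn Λ ((n : ℝ) - 1) = Nat.count (· ∈ Λ) n := by
  rw [countFn_eq_count, sub_add_cancel, Nat.floor_natCast]

lemma countFn_mono_s7 (Λ : Set ℕ) : Monotone (countFn Λ) := fun x y hxy => by
  simp only [countFn_eq_count]
  exact Nat.count_monotone _ (Nat.floor_le_floor (by linarith))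

lemma countFn_le (Λ : Set ℕ) {x : ℝ} (hx : 0 ≤ x) : (countFn Λ x : ℝ) ≤ x + 1 := by
  rw [countFn_eq_count]
  exact (Nat.cast_le.2 (Nat.count_le _)).trans (Nat.floor_le (by linarith))

lemma countFn_sub_countFn_le_of_subset {Λ' Λ : Set ℕ} (h : Λ' ⊆ Λ) {x y : ℝ} (hxy : x ≤ y) :
    (countFn Λ' y : ℝ) - countFn Λ' x ≤ (countFn Λ y : ℝ) - countFn Λ x := by
  simp only [countFn_eq_count]
  obtain ⟨k, hk⟩ :=
    Nat.exists_eq_add_of_le (Nat.floor_le_floor (R := ℝ) (by linarith : x + 1 ≤ y + 1))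
  rw [hk, Nat.count_add, Nat.count_add]
  push_cast
  simp only [add_sub_cancel_left, Nat.cast_le]
  exact Nat.count_mono_left fun i _ hi => h hi

lemma hasDensity_empty : HasDensity ∅ 0 := by
  simp [HasDensity, countFn]

lemma windowRatio_nonneg (Λ : Set ℕ) {r x : ℝ} (hr : 0 ≤ r) (hx : 0 ≤ x) :
    0 ≤ windowRatio Λ r x := by
  have hmono : (countFn Λ x : ℝ) ≤ countFn Λ ((1 + r) * x) :=
    Nat.cast_le.2 (countFn_mono_s7 Λ (by nlinarith))
  exact div_nonneg (sub_nonneg.2 hmono) (by positivity)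

lemma windowRatio_le (Λ : Set ℕ) {r x : ℝ} (hr : 0 < r) (hx : 1 ≤ x) :
    windowRatio Λ r x ≤ (2 + r) / r := by
  have hcount := countFn_le Λ (by nlinarith : 0 ≤ (1 + r) * x)
  rw [windowRatio, div_le_div_iff₀ (by nlinarith) hr]
  nlinarith [Nat.cast_nonneg (α := ℝ) (countFn Λ x)]

lemma HasDensity.tendsto_windowRatio {Λ : Set ℕ} {d r : ℝ} (hd : HasDensity Λ d) (hr : 0 < r) :
    Tendsto (windowRatio Λ r) atTop (𝓝 d) := by
  have hstretch : Tendsto (fun x : ℝ => (countFn Λ ((1 + r) * x) : ℝ) / ((1 + r) * x))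
      atTop (𝓝 d) := Tendsto.comp hd (tendsto_id.const_mul_atTop (by linarith))
  have hlim := ((hstretch.const_mul (1 + r)).sub hd).div_const r
  rw [show ((1 + r) * d - d) / r = d by field_simp; ring] at hlim
  refine hlim.congr' ?_
  filter_upwards [eventually_gt_atTop 0] with x hx
  rw [windowRatio]
  field_simp

lemma HasDensity.le_lowerWindow {Λ' Λ : Set ℕ} {d r : ℝ} (hd : HasDensity Λ' d) (hsub : Λ' ⊆ Λ)
    (hr : 0 < r) : d ≤ lowerWindow Λ r := by
  have hlim := hd.tendsto_windowRatio hr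
  have hle : ∀ᶠ x in atTop, windowRatio Λ' r x ≤ windowRatio Λ r x := by
    filter_upwards [eventually_gt_atTop 0] with x hx
    exact div_le_div_of_nonneg_right (countFn_sub_countFn_le_of_subset hsub (by nlinarith))
      (by positivity)
  rw [← hlim.liminf_eq, lowerWindow]
  exact liminf_le_liminf hle hlim.isBoundedUnder_ge (isCoboundedUnder_ge_of_eventually_le atTop
    ((eventually_ge_atTop 1).mono fun x hx => windowRatio_le Λ hr hx))

lemma le_countFn_sub_countFn_of_window {Λ : Set ℕ} {r s X : ℝ} (hr : 0 < r) (hs : 0 ≤ s)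
    (hX : 0 < X)
    (hwin : ∀ x, X ≤ x → s * (r * x) ≤ (countFn Λ ((1 + r) * x) : ℝ) - countFn Λ x)
    {a b : ℝ} (ha : X ≤ a) (hab : a ≤ b) :
    s * ((1 - r) * b - a) ≤ (countFn Λ b : ℝ) - countFn Λ a := by
  have ha0 : 0 < a := hX.trans_le ha
  obtain ⟨J, hJ⟩ := pow_unbounded_of_one_lt (b / a) (by linarith : 1 < 1 + r)
  rw [div_lt_iff₀ ha0] at hJ
  induction J generalizing b with
  | zero => linarith [pow_zero (1 + r)]
  | succ J ih =>
    have hmono : (countFn Λ a : ℝ) ≤ countFn Λ b := Nat.cast_le.2 (countFn_mono_s7 Λ hab)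
    rcases le_or_gt b ((1 + r) * a) with hb | hb
    · -- a single window: the left side is not positive
      have hshort : (1 - r) * b ≤ a := by
        rcases le_or_gt r 1 with hr1 | hr1 <;> nlinarith
      nlinarith
    · set y := b / (1 + r) with hy
      have hby : b = (1 + r) * y := by rw [hy]; field_simp
      have hay : a ≤ y := by rw [hy, le_div_iff₀ (by linarith)]; linarith
      have hyJ : y < (1 + r) ^ J * a := by
        rw [hy, div_lt_iff₀ (by linarith)]; rw [pow_succ] at hJ; linarith
      have hwin_y := hwin y (ha.trans hay)
      rw [← hby] at hwin_y
      have hsplit :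
          s * ((1 - r) * b - a) = s * ((1 - r) * y - a) + s * (r * y) - s * (r ^ 2 * y) := by
        rw [hby]; ring
      have hloss : 0 ≤ s * (r ^ 2 * y) := by have := ha0.trans_le hay; positivity
      linarith [ih hay hyJ]

lemma exists_le_countFn_sub_countFn_of_lt_lowerWindow {Λ : Set ℕ} {r s : ℝ} (hr : 0 < r)
    (hs : 0 ≤ s) (h : s < lowerWindow Λ r) :
    ∃ X, ∀ a b : ℝ, X ≤ a → a ≤ b → s * ((1 - r) * b - a) ≤ (countFn Λ b : ℝ) - countFn Λ a := by
  have hbdd : IsBoundedUnder (· ≥ ·) atTop (windowRatio Λ r) :=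
    ⟨0, eventually_map.2 ((eventually_ge_atTop 0).mono fun x hx => windowRatio_nonneg Λ hr.le hx)⟩
  obtain ⟨X, hX⟩ := eventually_atTop.1 (eventually_lt_of_lt_liminf h hbdd)
  refine ⟨max X 1, fun a b ha hab => le_countFn_sub_countFn_of_window hr hs (by positivity)
    (fun x hx => ?_) ha hab⟩
  have hx0 : 0 < x := by linarith [le_max_right X 1]
  have hwin := hX x (le_of_max_le_left hx)
  rw [windowRatio, lt_div_iff₀ (by positivity)] at hwin
  linarith

noncomputable def greedyCount (Λ : Set ℕ) (t : ℝ) : ℕ → ℕ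
  | 0 => 0
  | n + 1 => greedyCount Λ t n + if n ∈ Λ ∧ (greedyCount Λ t n : ℝ) < t * (n + 1) then 1 else 0

def greedySet (Λ : Set ℕ) (t : ℝ) : Set ℕ :=
  {n | n ∈ Λ ∧ (greedyCount Λ t n : ℝ) < t * (n + 1)}

lemma greedySet_subset (Λ : Set ℕ) (t : ℝ) : greedySet Λ t ⊆ Λ := fun _ h => h.1

lemma count_greedySet (Λ : Set ℕ) (t : ℝ) (n : ℕ) :
    Nat.count (· ∈ greedySet Λ t) n = greedyCount Λ t n := by
  induction n with
  | zero => rfl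
  | succ n ih =>
    rw [Nat.count_succ, ih, greedyCount]
    simp only [greedySet, Set.mem_ofPred_eq]
    congr

lemma greedyCount_lt (Λ : Set ℕ) {t : ℝ} (ht : 0 ≤ t) (n : ℕ) :
    (greedyCount Λ t n : ℝ) < t * n + 1 := by
  induction n with
  | zero => simp [greedyCount]
  | succ n ih =>
    rw [greedyCount]
    split_ifs with h
    · push_cast; linarith [h.2]
    · push_cast; linarith

-- Take for `n` the last time before `m` at which an element of `Λ` was rejected (or `0`).
lemma exists_le_greedyCount (Λ : Set ℕ) (t : ℝ) (m : ℕ) :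
    ∃ n ≤ m, t * n + ((Nat.count (· ∈ Λ) m : ℝ) - Nat.count (· ∈ Λ) n) ≤ greedyCount Λ t m := by
  induction m with
  | zero => exact ⟨0, le_rfl, by simp [greedyCount]⟩
  | succ m ih =>
    obtain ⟨n, hnm, hn⟩ := ih
    by_cases hblocked : m ∈ Λ ∧ t * (m + 1) ≤ greedyCount Λ t m
    · refine ⟨m + 1, le_rfl, ?_⟩
      rw [greedyCount, if_neg (by simp [hblocked.2])]
      push_cast
      linarith [hblocked.2]
    · refine ⟨n, hnm.trans m.le_succ, ?_⟩
      rw [Nat.count_succ, greedyCount]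
      by_cases hm : m ∈ Λ
      · rw [if_pos hm, if_pos ⟨hm, not_le.1 fun h => hblocked ⟨hm, h⟩⟩]
        push_cast
        linarith
      · rw [if_neg hm, if_neg fun h => hm h.1]
        simpa using hn

lemma sub_mul_le_add_count_sub_count {Λ : Set ℕ} {r s t X : ℝ} (ht : 0 ≤ t) (hts : t ≤ s)
    (hr : 0 ≤ r)
    (hΛ : ∀ a b : ℝ, X ≤ a → a ≤ b → s * ((1 - r) * b - a) ≤ (countFn Λ b : ℝ) - countFn Λ a)
    {m n : ℕ} (hnm : n ≤ m) :
    (t - s * r) * m - t * (⌈X⌉₊ + 1) ≤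
      t * n + ((Nat.count (· ∈ Λ) m : ℝ) - Nat.count (· ∈ Λ) n) := by
  have hsr : 0 ≤ s * r := mul_nonneg (ht.trans hts) hr
  have hcount_mono : ∀ {i j : ℕ}, i ≤ j → (Nat.count (· ∈ Λ) i : ℝ) ≤ Nat.count (· ∈ Λ) j :=
    fun hij => Nat.cast_le.2 (Nat.count_monotone _ hij)
  have hfar : ∀ n, ⌈X⌉₊ + 1 ≤ n → n ≤ m →
      (t - s * r) * m ≤ t * n + ((Nat.count (· ∈ Λ) m : ℝ) - Nat.count (· ∈ Λ) n) := by
    intro n hn hnm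
    have hXn : X ≤ (n : ℝ) - 1 := by
      have : ((⌈X⌉₊ + 1 : ℕ) : ℝ) ≤ n := Nat.cast_le.2 hn
      push_cast at this
      linarith [Nat.le_ceil X]
    have hnm' : (n : ℝ) - 1 ≤ (m : ℝ) - 1 := by linarith [(Nat.cast_le (α := ℝ)).2 hnm]
    have hwin := hΛ _ _ hXn hnm'
    rw [countFn_natCast_sub_one, countFn_natCast_sub_one] at hwin
    nlinarith [(Nat.cast_le (α := ℝ)).2 hnm]
  rcases le_or_gt (⌈X⌉₊ + 1) n with hn | hn
  · nlinarith [hfar n hn hnm]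
  rcases le_or_gt (⌈X⌉₊ + 1) m with hm | hm
  · have hpivot := hfar _ le_rfl hm
    have hcount := hcount_mono hn.le
    push_cast at hpivot hcount
    nlinarith
  · have hm' : (m : ℝ) ≤ ⌈X⌉₊ + 1 := by exact_mod_cast hm.le
    nlinarith [hcount_mono hnm]

lemma eventually_lt_greedyCount {Λ : Set ℕ} {a s t : ℝ} (ht : 0 ≤ t) (hts : t < s)
    (h : ∀ᶠ r in 𝓝[>] 0, s < lowerWindow Λ r) (ha : a < t) :
    ∀ᶠ m : ℕ in atTop, a * m < greedyCount Λ t m := by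
  have hsmall : ∀ᶠ r in 𝓝[>] (0 : ℝ), s * r < t - a := by
    refine nhdsWithin_le_nhds (Tendsto.eventually_lt_const (sub_pos.2 ha) ?_)
    simpa using (continuous_const_mul s).tendsto 0
  obtain ⟨r, hsr, hr, hrgap⟩ := (h.and (eventually_mem_nhdsWithin.and hsmall)).exists
  obtain ⟨X, hX⟩ := exists_le_countFn_sub_countFn_of_lt_lowerWindow hr (ht.trans hts.le) hsr
  have hgap : 0 < t - s * r - a := by linarith
  filter_upwards [tendsto_natCast_atTop_atTop.eventually_gt_atTop
    (t * (⌈X⌉₊ + 1) / (t - s * r - a))] with m hm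
  obtain ⟨n, hnm, hn⟩ := exists_le_greedyCount Λ t m
  have := sub_mul_le_add_count_sub_count ht hts.le hr.le hX hnm
  rw [div_lt_iff₀ hgap] at hm
  linarith

lemma tendsto_greedyCount_div {Λ : Set ℕ} {s t : ℝ} (ht : 0 ≤ t) (hts : t < s)
    (h : ∀ᶠ r in 𝓝[>] 0, s < lowerWindow Λ r) :
    Tendsto (fun m : ℕ => (greedyCount Λ t m : ℝ) / m) atTop (𝓝 t) := by
  refine tendsto_order.2 ⟨fun a ha => ?_, fun b hb => ?_⟩
  · filter_upwards [eventually_lt_greedyCount ht hts h ha, eventually_gt_atTop 0] with m hm hm0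
    rwa [lt_div_iff₀ (by positivity)]
  · filter_upwards [tendsto_natCast_atTop_atTop.eventually_gt_atTop (1 / (b - t)),
      eventually_gt_atTop 0] with m hm hm0
    rw [div_lt_iff₀ (sub_pos.2 hb)] at hm
    rw [div_lt_iff₀ (by positivity)]
    nlinarith [greedyCount_lt Λ ht m]

lemma hasDensity_of_tendsto_count_div {Λ : Set ℕ} {d : ℝ}
    (h : Tendsto (fun n : ℕ => (Nat.count (· ∈ Λ) n : ℝ) / n) atTop (𝓝 d)) : HasDensity Λ d := by
  have hshift : Tendsto (fun x : ℝ => x + 1) atTop atTop :=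
    tendsto_atTop_add_const_right _ 1 tendsto_id
  have hfloor : Tendsto (fun x : ℝ => (⌊x + 1⌋₊ : ℝ) / x) atTop (𝓝 1) := by
    have hinv : Tendsto (fun x : ℝ => (x + 1) / x) atTop (𝓝 1) := by
      simpa using tendsto_inv_atTop_zero.const_add (1 : ℝ) |>.congr' <|
        (eventually_gt_atTop 0).mono fun x hx => by field_simp
    rw [← mul_one (1 : ℝ)]
    refine ((tendsto_nat_floor_div_atTop.comp hshift).mul hinv).congr' ?_
    filter_upwards [eventually_gt_atTop 0] with x hx
    simp only [Function.comp_apply]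
    field_simp
  have hlim := (h.comp (tendsto_nat_floor_atTop.comp hshift)).mul hfloor
  rw [mul_one] at hlim
  refine hlim.congr' ?_
  filter_upwards [eventually_gt_atTop 0] with x hx
  have hk : (⌊x + 1⌋₊ : ℝ) ≠ 0 := (Nat.cast_pos.2 (Nat.floor_pos.2 (by linarith))).ne'
  simp only [Function.comp_apply, countFn_eq_count]
  field_simp

lemma hasDensity_greedySet {Λ : Set ℕ} {s t : ℝ} (ht : 0 ≤ t) (hts : t < s)
    (h : ∀ᶠ r in 𝓝[>] 0, s < lowerWindow Λ r) : HasDensity (greedySet Λ t) t :=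
  hasDensity_of_tendsto_count_div <| by
    simpa only [count_greedySet] using tendsto_greedyCount_div ht hts h

/-- The minimum density `D̲₂(Λ)` is the supremum of densities of
measurable subsets of `Λ`. -/
theorem minDensity_eq_sup_subset_densities (Λ : Set ℕ) (L : ℝ)
    (hL : Tendsto (fun r => lowerWindow Λ r) (nhdsWithin 0 (Set.Ioi 0)) (nhds L)) :
    IsLUB {d : ℝ | ∃ Λ' : Set ℕ, Λ' ⊆ Λ ∧ HasDensity Λ' d} L := by
  refine ⟨?_, fun b hb => le_of_forall_lt_imp_le_of_dense fun t htL => ?_⟩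
  · rintro d ⟨Λ', hsub, hd⟩
    exact ge_of_tendsto hL (eventually_nhdsWithin_of_forall fun r hr => hd.le_lowerWindow hsub hr)
  · rcases lt_or_ge t 0 with ht | ht
    · exact ht.le.trans (hb ⟨∅, Set.empty_subset Λ, hasDensity_empty⟩)
    · obtain ⟨s, hts, hsL⟩ := exists_between htL
      exact hb ⟨greedySet Λ t, greedySet_subset Λ t,
        hasDensity_greedySet ht hts (hL.eventually (eventually_gt_nhds hsL))⟩
end
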